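/- Let mu_1,...,mu_k be probability measures supported on [0, L] with mean 1, all of whose free cumulants are non-negative. Then the free multiplicative convolution mu = mu_1 ⊠ ... ⊠ mu_k is supported in [0, e L (k+1)]; more precisely limsup_n (m_n(mu))^{1/n} ≤ (k+1)^{k+1}/k^k * L ≤ e(k+1)L. -/

import Mathlib

open scoped BigOperators Classical

/-- Partitions of `Fin n` (i.e. of `{1,…,n}`). -/
abbrev NCP (n : ℕ) := Finpartition (Finset.univ : Finset (Fin n))

/-- `x` and `y` lie in the same block of `P`. -/
def pRel {n : ℕ} (P : NCP n) (x y : Fin n) : Prop := ∃ t ∈ P.parts, x ∈ t ∧ y ∈ t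

/-- `P` is a non-crossing partition. -/
def IsNonCrossing {n : ℕ} (P : NCP n) : Prop :=
  ∀ a b c d : Fin n, a < b → b < c → c < d → pRel P a c → pRel P b d → pRel P a b

/-- Every block of `P` has exactly `k` elements (`k`-equal). -/
def IsKEqual (k : ℕ) {n : ℕ} (P : NCP n) : Prop := ∀ t ∈ P.parts, t.card = k

/-- Every block of `P` has size divisible by `k` (`k`-divisible). -/
def IsKDivisible (k : ℕ) {n : ℕ} (P : NCP n) : Prop := ∀ t ∈ P.parts, k ∣ t.card

/-- Every block of `P` contains only numbers of one residue class mod `k`. -/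
def IsKPreserving (k : ℕ) {n : ℕ} (P : NCP n) : Prop :=
  ∀ t ∈ P.parts, ∀ x ∈ t, ∀ y ∈ t, (x : ℕ) % k = (y : ℕ) % k

/-- The relation on `{1,…,2n}` obtained by putting `P` on the odd positions and `Q` on
the even positions (0-indexed: `P` on evens, `Q` on odds). -/
def jointRel {n : ℕ} (P Q : NCP n) (x y : Fin (2 * n)) : Prop :=
  ((x : ℕ) % 2 = 0 ∧ (y : ℕ) % 2 = 0 ∧
      pRel P ⟨(x : ℕ) / 2, by have := x.isLt; omega⟩ ⟨(y : ℕ) / 2, by have := y.isLt; omega⟩) ∨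
  ((x : ℕ) % 2 = 1 ∧ (y : ℕ) % 2 = 1 ∧
      pRel Q ⟨(x : ℕ) / 2, by have := x.isLt; omega⟩ ⟨(y : ℕ) / 2, by have := y.isLt; omega⟩)

/-- A symmetric-relation analogue of non-crossing. -/
def RelNonCrossing {m : ℕ} (R : Fin m → Fin m → Prop) : Prop :=
  ∀ a b c d : Fin m, a < b → b < c → c < d → R a c → R b d → R a b

/-- `Q` is the Kreweras complement of `P`: the union `P ∪ Q` (interleaved) is non-crossing and
`Q` is the largest such partition in the reverse refinement order. -/
def IsKr {n : ℕ} (P Q : NCP n) : Prop :=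
  RelNonCrossing (jointRel P Q) ∧ ∀ Q' : NCP n, RelNonCrossing (jointRel P Q') → Q' ≤ Q

open MeasureTheory

/-- For a `k`-preserving partition `Q` (the Kreweras complement of a `k`-divisible or `k`-equal
partition), `Q` decomposes as `π₁ ∪ ⋯ ∪ π_k` along residue classes mod `k`; this is the product
`κ_{π₁}(μ₁)⋯κ_{π_k}(μ_k)`, computed as a product over the blocks of `Q`, where each block uses
the cumulant sequence `c i` of the measure `μ_i` determined by the residue class mod `k` of its
elements. -/
noncomputable def krProd (k : ℕ) (hk : 0 < k) {m : ℕ} (Q : NCP m)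
    (c : Fin k → ℕ → ℝ) : ℝ :=
  ∏ t ∈ Q.parts.attach,
    c ⟨((t.1.min' (Q.nonempty_of_mem_parts t.2)) : ℕ) % k, Nat.mod_lt _ hk⟩ t.1.card

/-!
A cumulant is dominated by the moment of the same order (the one-block partition is a term of
the moment–cumulant formula), so `κ_s(μ_i) ≤ m_s(μ_i) ≤ L^(s-1)`. Hence a term of the moment
formula for `ν` is at most `L^(kn - |Kr(π)|) ≤ L^(n-1)`: non-crossingness of `π ∪ Kr(π)` gives
`|π| + |Kr(π)| ≥ kn + 1`, and a `k`-divisible `π` has at most `n` blocks. A non-crossing partition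
is determined by the sizes of its blocks recorded at their minima, so the `k`-divisible ones inject
into sequences of `kn` natural numbers with sum `n`, of which there are
`binom((k+1)n - 1, n) ≤ ((k+1)^(k+1)/k^k)^n`. Thus `m_n(ν) ≤ ((k+1)^(k+1)/k^k · L)^n`, which bounds
the limsup and, by Chebyshev's inequality, the support of `ν`; finally `(1 + 1/k)^k ≤ e`.
-/

open Finset

lemma filter_le_and_le_eq_of_card_eq {α : Type*} [LinearOrder α] {s : Finset α} {i M M' : α}
    (h : (s.filter fun x => i ≤ x ∧ x ≤ M).card = (s.filter fun x => i ≤ x ∧ x ≤ M').card) :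
    s.filter (fun x => i ≤ x ∧ x ≤ M) = s.filter (fun x => i ≤ x ∧ x ≤ M') := by
  have hmono : ∀ {M M' : α}, M ≤ M' →
      s.filter (fun x => i ≤ x ∧ x ≤ M) ⊆ s.filter (fun x => i ≤ x ∧ x ≤ M') := fun hle _ hx =>
    mem_filter.2 ⟨(mem_filter.1 hx).1, (mem_filter.1 hx).2.1, (mem_filter.1 hx).2.2.trans hle⟩
  rcases le_total M M' with hle | hle
  · exact eq_of_subset_of_card_le (hmono hle) h.ge
  · exact (eq_of_subset_of_card_le (hmono hle) h.le).symm

namespace Finpartition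

variable {α : Type*} [LinearOrder α] {s : Finset α} (P : Finpartition s)

def NonCrossing : Prop :=
  ∀ a b c d : α, a < b → b < c → c < d → (∃ t ∈ P.parts, a ∈ t ∧ c ∈ t) →
    (∃ t ∈ P.parts, b ∈ t ∧ d ∈ t) → ∃ t ∈ P.parts, a ∈ t ∧ b ∈ t

def IsBlockMin (x : α) : Prop := x ∈ s ∧ ∀ y ∈ P.part x, x ≤ y

noncomputable def minBlockCard (x : α) : ℕ := if P.IsBlockMin x then (P.part x).card else 0

variable {P}

lemma isBlockMin_min' {t : Finset α} (ht : t ∈ P.parts) :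
    P.IsBlockMin (t.min' (P.nonempty_of_mem_parts ht)) := by
  have hmem := t.min'_mem (P.nonempty_of_mem_parts ht)
  refine ⟨P.le ht hmem, ?_⟩
  rw [P.part_eq_of_mem ht hmem]
  exact fun y hy => t.min'_le y hy

lemma IsBlockMin.eq_of_part_eq {x y : α} (hx : P.IsBlockMin x) (hy : P.IsBlockMin y)
    (h : P.part x = P.part y) : x = y :=
  le_antisymm (hx.2 y (h ▸ P.mem_part hy.1)) (hy.2 x (h ▸ P.mem_part hx.1))

lemma minBlockCard_ne_zero_iff {x : α} : P.minBlockCard x ≠ 0 ↔ P.IsBlockMin x := by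
  unfold minBlockCard
  split_ifs with hx
  · exact iff_of_true (card_ne_zero_of_mem (P.mem_part hx.1)) hx
  · exact iff_of_false (fun h => h rfl) hx

variable (P)

lemma image_part_filter_isBlockMin : (s.filter P.IsBlockMin).image P.part = P.parts := by
  ext t
  simp only [mem_image, mem_filter]
  constructor
  · rintro ⟨x, ⟨hx, -⟩, rfl⟩
    exact P.part_mem.2 hx
  · intro ht
    exact ⟨_, ⟨(isBlockMin_min' ht).1, isBlockMin_min' ht⟩, P.part_eq_of_mem ht (t.min'_mem _)⟩

lemma injOn_part_filter_isBlockMin : Set.InjOn P.part (s.filter P.IsBlockMin) :=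
  fun _ hx _ hy h => (mem_filter.1 hx).2.eq_of_part_eq (mem_filter.1 hy).2 h

lemma card_filter_isBlockMin : (s.filter P.IsBlockMin).card = P.parts.card := by
  rw [← P.image_part_filter_isBlockMin, card_image_of_injOn P.injOn_part_filter_isBlockMin]

lemma sum_minBlockCard : ∑ x ∈ s, P.minBlockCard x = s.card := by
  simp only [minBlockCard]
  rw [← sum_filter, ← sum_image P.injOn_part_filter_isBlockMin, P.image_part_filter_isBlockMin,
    P.sum_card_parts]

lemma sum_card_sub_one_parts : ∑ t ∈ P.parts, (t.card - 1) = s.card - P.parts.card := by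
  rw [sum_tsub_distrib _ fun t ht => card_pos.2 (P.nonempty_of_mem_parts ht), P.sum_card_parts,
    ← card_eq_sum_ones]

variable {P}

/-- An element of `[i, max]` outside the block of `i` lies in a block whose minimum is below `i`,
and that block would cross the block of `i`. -/
lemma NonCrossing.exists_part_eq_filter (hP : P.NonCrossing) {i : α} (hi : P.IsBlockMin i)
    (hmax : ∀ x, P.IsBlockMin x → x ≤ i) :
    ∃ M, P.part i = s.filter (fun x => i ≤ x ∧ x ≤ M) := by
  refine ⟨(P.part i).max' ⟨i, P.mem_part hi.1⟩, Subset.antisymm ?_ ?_⟩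
  · exact fun x hx => mem_filter.2 ⟨P.le (P.part_mem.2 hi.1) hx, hi.2 x hx, le_max' _ x hx⟩
  intro x hx
  obtain ⟨hxs, hix, hxM⟩ := mem_filter.1 hx
  by_contra hxB
  have hC : P.part x ∈ P.parts := P.part_mem.2 hxs
  have hiC : i ∉ P.part x := fun h => hxB (P.part_eq_of_mem hC h ▸ P.mem_part hxs)
  set y := (P.part x).min' (P.nonempty_of_mem_parts hC)
  have hyC : y ∈ P.part x := min'_mem _ _
  have hyi : y < i := (hmax y (isBlockMin_min' hC)).lt_of_ne fun h => hiC (h ▸ hyC)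
  have hix' : i < x := hix.lt_of_ne fun h => hxB (h ▸ P.mem_part hi.1)
  have hxM' : x < _ := hxM.lt_of_ne fun h => hxB (h ▸ max'_mem _ _)
  obtain ⟨t, ht, hyt, hit⟩ := hP y i x _ hyi hix' hxM' ⟨_, hC, hyC, P.mem_part hxs⟩
    ⟨_, P.part_mem.2 hi.1, P.mem_part hi.1, max'_mem _ _⟩
  exact hiC (P.eq_of_mem_parts ht hC hyt hyC ▸ hit)

variable {B : Finset α}

lemma parts_avoid_of_mem (hB : B ∈ P.parts) : (P.avoid B).parts = P.parts.erase B := by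
  ext c
  rw [mem_avoid, mem_erase]
  constructor
  · rintro ⟨d, hd, hdB, rfl⟩
    have hdB' : d ≠ B := fun h => hdB h.le
    have hdisj : Disjoint d B := P.disjoint hd hB hdB'
    rw [Finset.sdiff_eq_self_of_disjoint hdisj]
    exact ⟨hdB', hd⟩
  · rintro ⟨hcB, hc⟩
    have hdisj := P.disjoint hc hB hcB
    exact ⟨c, hc, fun hle => P.ne_bot hc (le_bot_iff.1 (hdisj le_rfl hle)),
      Finset.sdiff_eq_self_of_disjoint hdisj⟩

lemma NonCrossing.avoid (hP : P.NonCrossing) (hB : B ∈ P.parts) : (P.avoid B).NonCrossing := by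
  intro a b c d hab hbc hcd ⟨t₁, ht₁, ha, hc⟩ ⟨t₂, ht₂, hb, hd⟩
  rw [parts_avoid_of_mem hB] at ht₁ ht₂ ⊢
  obtain ⟨t, ht, hat, hbt⟩ :=
    hP a b c d hab hbc hcd ⟨t₁, mem_of_mem_erase ht₁, ha, hc⟩ ⟨t₂, mem_of_mem_erase ht₂, hb, hd⟩
  obtain rfl := P.eq_of_mem_parts ht (mem_of_mem_erase ht₁) hat ha
  exact ⟨t, ht₁, hat, hbt⟩

lemma part_avoid_of_notMem (hB : B ∈ P.parts) {x : α} (hxB : x ∉ B) :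
    (P.avoid B).part x = P.part x := by
  by_cases hx : x ∈ s
  · refine part_eq_of_mem _ ?_ (P.mem_part hx)
    rw [parts_avoid_of_mem hB]
    exact mem_erase.2 ⟨fun h => hxB (h ▸ P.mem_part hx), P.part_mem.2 hx⟩
  · rw [(P.avoid B).part_eq_empty.2 fun h => hx (mem_sdiff.1 h).1, P.part_eq_empty.2 hx]

lemma isBlockMin_avoid_iff (hB : B ∈ P.parts) {x : α} (hxB : x ∉ B) :
    (P.avoid B).IsBlockMin x ↔ P.IsBlockMin x := by
  simp only [IsBlockMin, part_avoid_of_notMem hB hxB, mem_sdiff, hxB, not_false_eq_true, and_true]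

lemma minBlockCard_avoid (hB : B ∈ P.parts) (x : α) :
    (P.avoid B).minBlockCard x = if x ∈ B then 0 else P.minBlockCard x := by
  by_cases hxB : x ∈ B
  · rw [if_pos hxB, minBlockCard, if_neg fun h => (mem_sdiff.1 h.1).2 hxB]
  · rw [if_neg hxB, minBlockCard, minBlockCard, part_avoid_of_notMem hB hxB]
    exact if_congr (isBlockMin_avoid_iff hB hxB) rfl rfl

/-- Induction on `#s`: the block of the largest minimum is an interval of `s`, hence determined by
its size, and removing it leaves a smaller instance. -/
theorem NonCrossing.eq_of_minBlockCard_eq {P P' : Finpartition s} (hP : P.NonCrossing)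
    (hP' : P'.NonCrossing) (h : P.minBlockCard = P'.minBlockCard) : P = P' := by
  induction hn : s.card using Nat.strong_induction_on generalizing s with
  | _ n ih =>
    obtain rfl | ⟨x₀, hx₀⟩ := s.eq_empty_or_nonempty
    · ext t
      rw [P.parts_eq_empty_iff.2 rfl, P'.parts_eq_empty_iff.2 rfl]
    have hmin : ∀ x, P.IsBlockMin x ↔ P'.IsBlockMin x := fun x => by
      rw [← minBlockCard_ne_zero_iff, ← minBlockCard_ne_zero_iff, h]
    have hne : (s.filter P.IsBlockMin).Nonempty :=
      have h₀ := isBlockMin_min' (P.part_mem.2 hx₀)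
      ⟨_, mem_filter.2 ⟨h₀.1, h₀⟩⟩
    set i := (s.filter P.IsBlockMin).max' hne
    have hi : P.IsBlockMin i := (mem_filter.1 (max'_mem _ hne)).2
    have hmax : ∀ x, P.IsBlockMin x → x ≤ i := fun x hx => le_max' _ x (mem_filter.2 ⟨hx.1, hx⟩)
    obtain ⟨M, hM⟩ := hP.exists_part_eq_filter hi hmax
    obtain ⟨M', hM'⟩ :=
      hP'.exists_part_eq_filter ((hmin i).1 hi) fun x hx => hmax x ((hmin x).2 hx)
    have hcard : (P.part i).card = (P'.part i).card := by
      have := congrFun h i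
      rwa [minBlockCard, minBlockCard, if_pos hi, if_pos ((hmin i).1 hi)] at this
    have hB : P.part i = P'.part i := by
      rw [hM, hM'] at hcard ⊢
      exact filter_le_and_le_eq_of_card_eq hcard
    have hBP : P.part i ∈ P.parts := P.part_mem.2 hi.1
    have hBP' : P.part i ∈ P'.parts := hB ▸ P'.part_mem.2 hi.1
    have hlt : (s \ P.part i).card < n :=
      hn ▸ card_lt_card (sdiff_ssubset (P.le hBP) ⟨i, P.mem_part hi.1⟩)
    have hrest := ih _ hlt (hP.avoid hBP) (hP'.avoid hBP')
      (funext fun x => by rw [minBlockCard_avoid hBP, minBlockCard_avoid hBP', h]) rfl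
    ext t
    rw [← insert_erase hBP, ← insert_erase hBP', ← parts_avoid_of_mem hBP,
      ← parts_avoid_of_mem hBP', hrest]

end Finpartition

/-- Stars and bars, as an upper bound. -/
lemma card_le_choose_of_injective {ι α : Type*} [Fintype ι] [Fintype α] {n : ℕ}
    (F : ι → α → ℕ) (hF : Function.Injective F) (hsum : ∀ i, ∑ a, F i a = n) :
    Fintype.card ι ≤ (Fintype.card α + n - 1).choose n := by
  let toSym : ι → Sym α n := fun i =>
    ⟨∑ a, Multiset.replicate (F i a) a, by simp [Multiset.card_sum, hsum]⟩
  have hinj : Function.Injective toSym := fun i j hij => hF <| funext fun a => by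
    simpa [toSym, Multiset.count_sum', Multiset.count_replicate] using
      congrArg (fun s : Sym α n => (s : Multiset α).count a) hij
  rw [← Sym.card_sym_eq_choose]
  exact Fintype.card_le_of_injective toSym hinj

lemma IsKDivisible.dvd_minBlockCard {k m : ℕ} {P : NCP m} (hP : IsKDivisible k P) (x : Fin m) :
    k ∣ P.minBlockCard x := by
  unfold Finpartition.minBlockCard
  split_ifs with hx
  · exact hP _ (P.part_mem.2 hx.1)
  · exact dvd_zero k

theorem card_nonCrossing_kDivisible_le {k : ℕ} (hk : 0 < k) (n : ℕ) :
    Fintype.card {P : NCP (k * n) // IsNonCrossing P ∧ IsKDivisible k P} ≤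
      ((k + 1) * n).choose n := by
  refine (card_le_choose_of_injective (n := n) (fun P x => P.1.minBlockCard x / k) ?_ ?_).trans ?_
  · intro P P' h
    refine Subtype.ext (Finpartition.NonCrossing.eq_of_minBlockCard_eq P.2.1 P'.2.1 ?_)
    funext x
    rw [← Nat.div_mul_cancel (P.2.2.dvd_minBlockCard x),
      ← Nat.div_mul_cancel (P'.2.2.dvd_minBlockCard x)]
    exact congrArg (· * k) (congrFun h x)
  · intro P
    refine Nat.eq_of_mul_eq_mul_left hk ?_
    rw [mul_sum, sum_congr rfl fun x _ => Nat.mul_div_cancel' (P.2.2.dvd_minBlockCard x),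
      P.1.sum_minBlockCard, card_univ, Fintype.card_fin]
  · exact Nat.choose_le_choose n (by rw [Fintype.card_fin]; lia)

lemma choose_mul_pow_mul_pow_le (a b : ℕ) :
    (a + b).choose a * a ^ a * b ^ b ≤ (a + b) ^ (a + b) := by
  have hterm := single_le_sum (f := fun i => a ^ i * b ^ (a + b - i) * (a + b).choose i)
    (fun _ _ => Nat.zero_le _) (mem_range.2 (by lia : a < a + b + 1))
  have hbinom := add_pow a b (a + b)
  simp only [Nat.cast_id] at hbinom
  rw [← hbinom, Nat.add_sub_cancel_left] at hterm
  calc _ = a ^ a * b ^ b * (a + b).choose a := by ring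
    _ ≤ _ := hterm

lemma cast_choose_le_pow (k n : ℕ) :
    (((k + 1) * n).choose n : ℝ) ≤ (((k : ℝ) + 1) ^ (k + 1) / (k : ℝ) ^ k) ^ n := by
  rcases Nat.eq_zero_or_pos n with rfl | hn
  · simp
  rcases Nat.eq_zero_or_pos k with rfl | hk
  · simp
  have hnat : ((k + 1) * n).choose n * k ^ (k * n) ≤ (k + 1) ^ ((k + 1) * n) := by
    have h := choose_mul_pow_mul_pow_le n (k * n)
    rw [show n + k * n = (k + 1) * n by ring, mul_pow k n, mul_pow (k + 1) n] at h
    refine Nat.le_of_mul_le_mul_right ?_ (pow_pos hn ((k + 1) * n))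
    calc _ = ((k + 1) * n).choose n * n ^ n * (k ^ (k * n) * n ^ (k * n)) := by ring
      _ ≤ _ := h
  rw [div_pow, ← pow_mul, ← pow_mul, le_div_iff₀ (by positivity)]
  exact_mod_cast hnat

lemma add_one_pow_succ_div_pow_le_exp_mul (k : ℕ) :
    ((k : ℝ) + 1) ^ (k + 1) / (k : ℝ) ^ k ≤ Real.exp 1 * ((k : ℝ) + 1) := by
  rcases Nat.eq_zero_or_pos k with rfl | hk
  · simp
  calc ((k : ℝ) + 1) ^ (k + 1) / (k : ℝ) ^ k = (1 + (k : ℝ)⁻¹) ^ k * ((k : ℝ) + 1) := by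
        rw [inv_eq_one_div, one_add_div (by positivity), div_pow, pow_succ]
        ring
    _ ≤ Real.exp 1 * ((k : ℝ) + 1) := by gcongr; exact Real.one_add_inv_pow_le_exp

section Kreweras

variable {m : ℕ} {P Q : NCP m}

lemma pRel_iff_mem_part {x y : Fin m} : pRel P x y ↔ x ∈ P.part y :=
  P.mem_part_iff_exists.symm

lemma pRel.symm {x y : Fin m} (h : pRel P x y) : pRel P y x :=
  let ⟨t, ht, hx, hy⟩ := h
  ⟨t, ht, hy, hx⟩

lemma jointRel.mod_two_eq {x y : Fin (2 * m)} (h : jointRel P Q x y) :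
    (x : ℕ) % 2 = (y : ℕ) % 2 := by
  rcases h with ⟨hx, hy, -⟩ | ⟨hx, hy, -⟩ <;> omega

lemma jointRel_of_pRel_left {p p' : Fin m} (h : pRel P p p') :
    jointRel P Q ⟨2 * p, by omega⟩ ⟨2 * p', by omega⟩ :=
  Or.inl ⟨by simp, by simp, by convert h using 2 <;> simp⟩

lemma jointRel_of_pRel_right {q q' : Fin m} (h : pRel Q q q') :
    jointRel P Q ⟨2 * q + 1, by omega⟩ ⟨2 * q' + 1, by omega⟩ :=
  Or.inr ⟨by simp, by simp, by convert h using 2 <;> simp <;> omega⟩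

/-- If `p ≤ q` or `q' < p`, the arc of `P` joining `p` and `q'` crosses the arc of `Q` joining `q`
and `q'`. -/
lemma RelNonCrossing.lt_and_le_of_pRel (h : RelNonCrossing (jointRel P Q)) {q q' p : Fin m}
    (hqq' : q < q') (hQ : pRel Q q q') (hP : pRel P p q') : q < p ∧ p ≤ q' := by
  have hq : (q : ℕ) < q' := hqq'
  constructor
  · by_contra! hp
    have hp : (p : ℕ) ≤ q := hp
    have := h ⟨2 * p, by omega⟩ ⟨2 * q + 1, by omega⟩ ⟨2 * q', by omega⟩ ⟨2 * q' + 1, by omega⟩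
      (Fin.mk_lt_mk.2 (by omega)) (Fin.mk_lt_mk.2 (by omega)) (Fin.mk_lt_mk.2 (by omega))
      (jointRel_of_pRel_left hP) (jointRel_of_pRel_right hQ)
    simpa using this.mod_two_eq
  · by_contra! hp
    have hp : (q' : ℕ) < p := hp
    have := h ⟨2 * q + 1, by omega⟩ ⟨2 * q', by omega⟩ ⟨2 * q' + 1, by omega⟩ ⟨2 * p, by omega⟩
      (Fin.mk_lt_mk.2 (by omega)) (Fin.mk_lt_mk.2 (by omega)) (Fin.mk_lt_mk.2 (by omega))
      (jointRel_of_pRel_right hQ) (jointRel_of_pRel_left hP.symm)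
    simpa using this.mod_two_eq

/-- The non-minimal elements of the blocks of `Q` are maxima of distinct blocks of `P`, none of
which is the block of `0`. -/
theorem RelNonCrossing.add_one_le_card_add_card (h : RelNonCrossing (jointRel P Q)) (hm : 0 < m) :
    m + 1 ≤ P.parts.card + Q.parts.card := by
  set S := univ.filter fun x => ¬ Q.IsBlockMin x
  have hS : S.card + Q.parts.card = m := by
    rw [← Q.card_filter_isBlockMin, add_comm, card_filter_add_card_filter_not, card_univ,
      Fintype.card_fin]
  have hpred : ∀ x ∈ S, ∃ y < x, pRel Q y x := by
    intro x hx
    have hx := (mem_filter.1 hx).2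
    simp only [Finpartition.IsBlockMin, mem_univ, true_and, not_forall, not_le] at hx
    obtain ⟨y, hy, hyx⟩ := hx
    exact ⟨y, hyx, pRel_iff_mem_part.2 hy⟩
  set z : Fin m := ⟨0, hm⟩
  have hmaps : ∀ x ∈ S, P.part x ∈ P.parts.erase (P.part z) := by
    intro x hx
    obtain ⟨y, hyx, hQ⟩ := hpred x hx
    refine mem_erase.2 ⟨fun hxz => ?_, P.part_mem.2 (mem_univ x)⟩
    have hzx : z ∈ P.part x := by rw [hxz]; exact P.mem_part (mem_univ z)
    exact Nat.not_lt_zero _ (h.lt_and_le_of_pRel hyx hQ (pRel_iff_mem_part.2 hzx)).1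
  have hinj : Set.InjOn P.part S := by
    intro x hx x' hx' hxx'
    obtain ⟨y, hyx, hQ⟩ := hpred x hx
    obtain ⟨y', hyx', hQ'⟩ := hpred x' hx'
    have hx'x : x ∈ P.part x' := by rw [← hxx']; exact P.mem_part (mem_univ x)
    have hxx' : x' ∈ P.part x := by rw [hxx']; exact P.mem_part (mem_univ x')
    exact le_antisymm (h.lt_and_le_of_pRel hyx' hQ' (pRel_iff_mem_part.2 hx'x)).2
      (h.lt_and_le_of_pRel hyx hQ (pRel_iff_mem_part.2 hxx')).2
  have hle := card_le_card_of_injOn _ hmaps hinj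
  rw [card_erase_of_mem (P.part_mem.2 (mem_univ z))] at hle
  have hP : 0 < P.parts.card := card_pos.2 ⟨_, P.part_mem.2 (mem_univ z)⟩
  omega

end Kreweras

lemma krProd_le_pow {k : ℕ} (hk : 0 < k) {m : ℕ} (Q : NCP m) {c : Fin k → ℕ → ℝ} {L : ℝ}
    (hc : ∀ i s, 1 ≤ s → 0 ≤ c i s ∧ c i s ≤ L ^ (s - 1)) :
    krProd k hk Q c ≤ L ^ (m - Q.parts.card) := by
  have hpos : ∀ t ∈ Q.parts, 1 ≤ t.card := fun t ht => card_pos.2 (Q.nonempty_of_mem_parts ht)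
  calc krProd k hk Q c ≤ ∏ t ∈ Q.parts.attach, L ^ (t.1.card - 1) :=
        prod_le_prod (fun t _ => (hc _ _ (hpos _ t.2)).1) fun t _ => (hc _ _ (hpos _ t.2)).2
    _ = L ^ (m - Q.parts.card) := by
        rw [prod_pow_eq_pow_sum, sum_attach Q.parts (fun t => t.card - 1),
          Q.sum_card_sub_one_parts, card_univ, Fintype.card_fin]

lemma IsKDivisible.card_parts_le {k n : ℕ} (hk : 0 < k) {P : NCP (k * n)}
    (hP : IsKDivisible k P) : P.parts.card ≤ n := by
  refine Nat.le_of_mul_le_mul_left ?_ hk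
  calc k * P.parts.card = P.parts.card • k := by rw [smul_eq_mul, mul_comm]
    _ ≤ ∑ t ∈ P.parts, t.card := card_nsmul_le_sum _ _ _ fun t ht =>
        Nat.le_of_dvd (card_pos.2 (P.nonempty_of_mem_parts ht)) (hP t ht)
    _ = k * n := by rw [P.sum_card_parts, card_univ, Fintype.card_fin]

lemma le_sum_nonCrossing_prod {κ : ℕ → ℝ} (hκ : ∀ s, 1 ≤ s → 0 ≤ κ s) {n : ℕ} (hn : 0 < n) :
    κ n ≤ ∑ P : {P : NCP n // IsNonCrossing P}, ∏ t ∈ P.1.parts, κ t.card := by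
  have hne : (univ : Finset (Fin n)) ≠ ⊥ := (univ_nonempty_iff.2 ⟨⟨0, hn⟩⟩).ne_empty
  let P₀ : {P : NCP n // IsNonCrossing P} := ⟨Finpartition.indiscrete hne,
    fun _ _ _ _ _ _ _ _ _ => ⟨univ, mem_singleton_self _, mem_univ _, mem_univ _⟩⟩
  calc κ n = ∏ t ∈ P₀.1.parts, κ t.card := by simp [P₀]
    _ ≤ _ := single_le_sum
        (f := fun P : {P : NCP n // IsNonCrossing P} => ∏ t ∈ P.1.parts, κ t.card)
        (fun P _ => prod_nonneg fun t ht => hκ _ (card_pos.2 (P.1.nonempty_of_mem_parts ht)))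
        (mem_univ P₀)

theorem sum_krProd_le_pow {k : ℕ} (hk : 0 < k) {c : Fin k → ℕ → ℝ} {L : ℝ} (hL : 1 ≤ L)
    (hc : ∀ i s, 1 ≤ s → 0 ≤ c i s ∧ c i s ≤ L ^ (s - 1)) {n : ℕ} (hn : 0 < n)
    (Kr : NCP (k * n) → NCP (k * n))
    (hKr : ∀ P, IsNonCrossing P → RelNonCrossing (jointRel P (Kr P))) :
    ∑ P : {P : NCP (k * n) // IsNonCrossing P ∧ IsKDivisible k P}, krProd k hk (Kr P.1) c ≤
      (((k : ℝ) + 1) ^ (k + 1) / (k : ℝ) ^ k * L) ^ n := by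
  have hterm : ∀ P : {P : NCP (k * n) // IsNonCrossing P ∧ IsKDivisible k P},
      krProd k hk (Kr P.1) c ≤ L ^ (n - 1) := by
    intro P
    have h1 := (hKr P.1 P.2.1).add_one_le_card_add_card (Nat.mul_pos hk hn)
    have h2 := P.2.2.card_parts_le hk
    exact (krProd_le_pow hk _ hc).trans (pow_le_pow_right₀ hL (by omega))
  calc _ ≤ ∑ _P : {P : NCP (k * n) // IsNonCrossing P ∧ IsKDivisible k P}, L ^ (n - 1) :=
        sum_le_sum fun P _ => hterm P
    _ = Fintype.card {P : NCP (k * n) // IsNonCrossing P ∧ IsKDivisible k P} * L ^ (n - 1) := by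
        rw [sum_const, card_univ, nsmul_eq_mul]
    _ ≤ (((k : ℝ) + 1) ^ (k + 1) / (k : ℝ) ^ k) ^ n * L ^ n := by
        gcongr
        · exact (Nat.cast_le.2 (card_nonCrossing_kDivisible_le hk n)).trans (cast_choose_le_pow k n)
        · omega
    _ = _ := (mul_pow _ _ _).symm

lemma measure_compl_Icc_eq_zero {α : Type*} [MeasurableSpace α] [LinearOrder α] {μ : Measure α}
    {a b : α} (ha : μ (Set.Iio a) = 0) (hb : μ (Set.Ioi b) = 0) : μ (Set.Icc a b)ᶜ = 0 := by
  refine measure_mono_null (fun x hx => ?_) (measure_union_null ha hb)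
  rw [Set.mem_compl_iff, Set.mem_Icc, not_and_or, not_le, not_le] at hx
  exact hx

section Moments

open Filter

variable {μ : Measure ℝ}

lemma integrable_pow_of_ae_mem_Icc [IsFiniteMeasure μ] {b : ℝ} (h : ∀ᵐ x ∂μ, x ∈ Set.Icc 0 b)
    (n : ℕ) : Integrable (fun x => x ^ n) μ :=
  .of_bound (continuous_pow n).aestronglyMeasurable (b ^ n) <| h.mono fun x hx => by
    rw [Real.norm_eq_abs, abs_of_nonneg (pow_nonneg hx.1 n)]
    exact pow_le_pow_left₀ hx.1 hx.2 n

lemma one_le_of_integral_id_eq_one [IsProbabilityMeasure μ] {L : ℝ}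
    (h : ∀ᵐ x ∂μ, x ∈ Set.Icc 0 L) (hmean : ∫ x, x ∂μ = 1) : 1 ≤ L := by
  have hint : Integrable (fun x : ℝ => x) μ := by simpa using integrable_pow_of_ae_mem_Icc h 1
  calc 1 = ∫ x, x ∂μ := hmean.symm
    _ ≤ ∫ _, L ∂μ := integral_mono_ae hint (integrable_const L) (h.mono fun x hx => hx.2)
    _ = L := by simp

lemma integral_pow_le_pow_pred [IsFiniteMeasure μ] {L : ℝ} (h : ∀ᵐ x ∂μ, x ∈ Set.Icc 0 L)
    (hmean : ∫ x, x ∂μ = 1) {n : ℕ} (hn : 1 ≤ n) : ∫ x, x ^ n ∂μ ≤ L ^ (n - 1) := by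
  have hint : Integrable (fun x : ℝ => x) μ := by simpa using integrable_pow_of_ae_mem_Icc h 1
  calc ∫ x, x ^ n ∂μ ≤ ∫ x, L ^ (n - 1) * x ∂μ := by
        refine integral_mono_ae (integrable_pow_of_ae_mem_Icc h n) (hint.const_mul _) ?_
        filter_upwards [h] with x hx
        rw [← Nat.sub_add_cancel hn, pow_succ, Nat.add_sub_cancel]
        exact mul_le_mul_of_nonneg_right (pow_le_pow_left₀ hx.1 hx.2 _) hx.1
    _ = L ^ (n - 1) := by rw [integral_const_mul, hmean, mul_one]

lemma limsup_rpow_one_div_le {a : ℕ → ℝ} {R : ℝ} (hR : 0 ≤ R) (h0 : ∀ n, 0 ≤ a n)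
    (hle : ∀ n, 1 ≤ n → a n ≤ R ^ n) :
    limsup (fun n : ℕ => a n ^ (1 / (n : ℝ))) atTop ≤ R := by
  refine limsup_le_of_le (isCoboundedUnder_le_of_le atTop fun n => Real.rpow_nonneg (h0 n) _)
    (eventually_atTop.2 ⟨1, fun n hn => ?_⟩)
  calc a n ^ (1 / (n : ℝ)) ≤ (R ^ n) ^ (1 / (n : ℝ)) :=
        Real.rpow_le_rpow (h0 n) (hle n hn) (by positivity)
    _ = R := by rw [one_div, Real.pow_rpow_inv_natCast hR (by omega)]

/-- Chebyshev's inequality applied to all moments. -/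
lemma measure_Ioi_eq_zero_of_integral_pow_le [IsFiniteMeasure μ] {R : ℝ} (hR : 0 ≤ R)
    (h0 : ∀ᵐ x ∂μ, 0 ≤ x) (hint : ∀ n, Integrable (fun x => x ^ n) μ)
    (hmom : ∀ n, 1 ≤ n → ∫ x, x ^ n ∂μ ≤ R ^ n) : μ (Set.Ioi R) = 0 := by
  have hgt : ∀ b, R < b → μ (Set.Ioi b) = 0 := by
    intro b hb
    have hb0 : 0 < b := hR.trans_lt hb
    have hle : ∀ n, 1 ≤ n → μ.real (Set.Ioi b) ≤ (R / b) ^ n := by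
      intro n hn
      have hcheb := mul_meas_ge_le_integral_of_nonneg (h0.mono fun x hx => pow_nonneg hx n)
        (hint n) (b ^ n)
      rw [div_pow, le_div_iff₀ (pow_pos hb0 n)]
      calc μ.real (Set.Ioi b) * b ^ n ≤ b ^ n * μ.real {x | b ^ n ≤ x ^ n} := by
            rw [mul_comm]
            exact mul_le_mul_of_nonneg_left (measureReal_mono
              (fun x hx => pow_le_pow_left₀ hb0.le (le_of_lt hx) n)) (pow_nonneg hb0.le n)
        _ ≤ ∫ x, x ^ n ∂μ := hcheb
        _ ≤ R ^ n := hmom n hn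
    have hlim := tendsto_pow_atTop_nhds_zero_of_lt_one (div_nonneg hR hb0.le)
      ((div_lt_one hb0).2 hb)
    exact (measureReal_eq_zero_iff).1
      (le_antisymm (ge_of_tendsto hlim (eventually_atTop.2 ⟨1, hle⟩)) measureReal_nonneg)
  have hcover : Set.Ioi R = ⋃ j : ℕ, Set.Ioi (R + 1 / (j + 1)) := by
    ext x
    simp only [Set.mem_Ioi, Set.mem_iUnion]
    refine ⟨fun hx => ?_, fun ⟨j, hj⟩ => lt_of_le_of_lt (le_add_of_nonneg_right (by positivity)) hj⟩
    obtain ⟨j, hj⟩ := exists_nat_one_div_lt (sub_pos.2 hx)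
    exact ⟨j, by linarith⟩
  rw [hcover]
  exact measure_iUnion_null fun j => hgt _ (lt_add_of_pos_right R (by positivity))

end Moments

/-- If `μ₁,…,μ_k` are probability measures on `[0,L]` with mean `1` and non-negative free
cumulants, then `μ = μ₁ ⊠ ⋯ ⊠ μ_k` (characterized via the combinatorial moment formula) is
supported in `[0, eL(k+1)]`; more precisely
`limsup_n m_n(μ)^{1/n} ≤ (k+1)^{k+1}/k^k · L ≤ e(k+1)L`. -/
theorem stmt17 (k : ℕ) (hk : 0 < k) (L : ℝ) (μ : Fin k → Measure ℝ)
    [∀ i, IsProbabilityMeasure (μ i)]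
    (hsupp : ∀ i, (μ i) (Set.Icc 0 L)ᶜ = 0)
    (hmean : ∀ i, ∫ x, x ∂(μ i) = 1)
    (c : Fin k → ℕ → ℝ)
    (hc : ∀ i, ∀ n : ℕ, 0 < n → ∫ x, x ^ n ∂(μ i) =
      ∑ P : {P : NCP n // IsNonCrossing P}, ∏ t ∈ P.1.parts, c i t.card)
    (hpos : ∀ i, ∀ n : ℕ, 1 ≤ n → 0 ≤ c i n)
    (Kr : ∀ m : ℕ, NCP m → NCP m)
    (hKr : ∀ (m : ℕ) (P : NCP m), IsNonCrossing P → IsKr P (Kr m P))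
    (ν : Measure ℝ) [IsProbabilityMeasure ν] (hν0 : ν (Set.Iio 0) = 0)
    (hcomp : ∃ M : ℝ, ν (Set.Ioi M) = 0)
    (hν : ∀ n : ℕ, 0 < n → ∫ x, x ^ n ∂ν =
      ∑ P : {P : NCP (k * n) // IsNonCrossing P ∧ IsKDivisible k P},
        krProd k hk (Kr (k * n) P.1) c) :
    Filter.limsup (fun n : ℕ => (∫ x, x ^ n ∂ν) ^ (1 / (n : ℝ))) Filter.atTop ≤
        ((k : ℝ) + 1) ^ (k + 1) / (k : ℝ) ^ k * L ∧
      ((k : ℝ) + 1) ^ (k + 1) / (k : ℝ) ^ k * L ≤ Real.exp 1 * ((k : ℝ) + 1) * L ∧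
      ν (Set.Icc 0 (Real.exp 1 * L * ((k : ℝ) + 1)))ᶜ = 0 := by
  have hμ : ∀ i, ∀ᵐ x ∂(μ i), x ∈ Set.Icc 0 L := fun i => mem_ae_iff.2 (hsupp i)
  have hL : 1 ≤ L := one_le_of_integral_id_eq_one (hμ ⟨0, hk⟩) (hmean _)
  have hcum : ∀ i s, 1 ≤ s → 0 ≤ c i s ∧ c i s ≤ L ^ (s - 1) := fun i s hs =>
    ⟨hpos i s hs, (le_sum_nonCrossing_prod (hpos i) hs).trans <|
      (hc i s hs).ge.trans (integral_pow_le_pow_pred (hμ i) (hmean i) hs)⟩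
  have hmom : ∀ n, 1 ≤ n → ∫ x, x ^ n ∂ν ≤ (((k : ℝ) + 1) ^ (k + 1) / (k : ℝ) ^ k * L) ^ n :=
    fun n hn => (hν n hn).trans_le <|
      sum_krProd_le_pow hk hL hcum hn (Kr (k * n)) fun P hP => (hKr _ P hP).1
  obtain ⟨M, hM⟩ := hcomp
  have hνM : ∀ᵐ x ∂ν, x ∈ Set.Icc 0 (max M 0) := mem_ae_iff.2 <| measure_compl_Icc_eq_zero hν0
    (measure_mono_null (Set.Ioi_subset_Ioi (le_max_left M 0)) hM)
  have hBL : 0 ≤ ((k : ℝ) + 1) ^ (k + 1) / (k : ℝ) ^ k * L := by positivity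
  have hexp := mul_le_mul_of_nonneg_right (add_one_pow_succ_div_pow_le_exp_mul k)
    (zero_le_one.trans hL)
  refine ⟨limsup_rpow_one_div_le hBL (fun n => integral_nonneg_of_ae <|
    hνM.mono fun x hx => pow_nonneg hx.1 n) hmom, hexp, ?_⟩
  refine measure_compl_Icc_eq_zero hν0 (measure_mono_null (Set.Ioi_subset_Ioi ?_)
    (measure_Ioi_eq_zero_of_integral_pow_le hBL (hνM.mono fun x hx => hx.1)
      (integrable_pow_of_ae_mem_Icc hνM) hmom))
  linarith
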